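/- For θ ∈ (0,π), the function H_1(θ) = exp(1 − cosθ/sinc(θ))/sinc(θ) satisfies H_1(θ) = exp(θ²/2 + V₁(θ)) where V₁(θ) = Σ_{n=2}^∞ (2 + 1/n)·ζ(2n)·(θ/π)^(2n). -/

import Mathlib

/-!
Write `x = θ / π` and `a_j = x² / (j + 1)²`. Taking logarithms in Euler's product
`sin (π x) = π x ∏ (1 - a_j)` gives `-log (sinc θ) = ∑_j -log (1 - a_j)`, and the partial
fraction expansion of the cotangent gives
`1 - cos θ / sinc θ = 1 - θ cot θ = ∑_j 2 a_j / (1 - a_j)`.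
Expanding both summands as power series in `a_j` and exchanging the two (nonnegative) summations,
the coefficient of `x^(2n)` collects `∑_j (j + 1)^(-2n) = ζ(2n)`, so `1 - θ cot θ - log (sinc θ)`
is `∑_{n ≥ 1} (2 + 1/n) ζ(2n) x^(2n)`. Its first term is `3 ζ(2) x² = θ² / 2`.
-/

open Real

/-- `sinc x = sin x / x` with `sinc 0 = 1`. -/
noncomputable def sinc (x : ℝ) : ℝ := if x = 0 then 1 else Real.sin x / x

/-- `ζ(n)` as a real number (for even integer arguments `ζ` is real). -/
noncomputable def zetaR (n : ℕ) : ℝ := (riemannZeta (n : ℂ)).re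

open Filter Topology

lemma hasSum_zetaR {k : ℕ} (hk : 1 < k) :
    HasSum (fun n : ℕ => 1 / ((n : ℝ) + 1) ^ k) (zetaR k) := by
  have hs : Summable (fun n : ℕ => 1 / ((n : ℝ) + 1) ^ k) := by
    exact_mod_cast (summable_nat_add_iff 1).mpr (Real.summable_one_div_nat_pow.mpr hk)
  have hζ : riemannZeta k = ((∑' n : ℕ, 1 / ((n : ℝ) + 1) ^ k : ℝ) : ℂ) := by
    rw [zeta_eq_tsum_one_div_nat_add_one_cpow (by simpa using hk), Complex.ofReal_tsum]
    push_cast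
    simp_rw [Complex.cpow_natCast]
  rw [zetaR, hζ, Complex.ofReal_re]
  exact hs.hasSum

lemma zetaR_two : zetaR 2 = π ^ 2 / 6 := by
  rw [zetaR, Nat.cast_ofNat, riemannZeta_two]
  norm_cast

lemma Real.hasSum_cot_sub_inv {x : ℝ} (hx : ∀ n : ℤ, (n : ℝ) ≠ x) :
    HasSum (fun n : ℕ => 2 * x / (x ^ 2 - ((n : ℝ) + 1) ^ 2)) (π * cot (π * x) - 1 / x) := by
  have hz : (x : ℂ) ∈ Complex.integerComplement := by
    rintro ⟨n, hn⟩
    exact hx n (by exact_mod_cast hn)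
  rw [← Complex.hasSum_ofReal]
  push_cast
  rw [cot_series_rep' hz]
  refine (summable_cotTerm hz).hasSum.congr_fun fun n => ?_
  rw [cotTerm_identity hz]
  ring

lemma hasSum_two_add_inv_mul_pow {a : ℝ} (ha : |a| < 1) :
    HasSum (fun n : ℕ => (2 + 1 / ((n : ℝ) + 1)) * a ^ (n + 1))
      (2 * a / (1 - a) - log (1 - a)) := by
  have hgeom := (hasSum_geometric_of_abs_lt_one ha).mul_left (2 * a)
  rw [show 2 * a / (1 - a) - log (1 - a) = 2 * a * (1 - a)⁻¹ + -log (1 - a) by ring]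
  exact (hgeom.add (Real.hasSum_pow_div_log_of_abs_lt_one ha)).congr_fun fun n => by ring

lemma sq_div_succ_sq_lt_one {x : ℝ} (hx : |x| < 1) (n : ℕ) : x ^ 2 / ((n : ℝ) + 1) ^ 2 < 1 := by
  have hn : (1 : ℝ) ≤ ((n : ℝ) + 1) ^ 2 := one_le_pow₀ (by linarith [n.cast_nonneg (α := ℝ)])
  rw [div_lt_one (by positivity)]
  linarith [(sq_lt_one_iff_abs_lt_one x).mpr hx]

lemma Real.hasSum_neg_log_one_sub_sq_div {x : ℝ} (hx0 : x ≠ 0) (hx : |x| < 1) :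
    HasSum (fun n : ℕ => -log (1 - x ^ 2 / ((n : ℝ) + 1) ^ 2)) (-log (sin (π * x) / (π * x))) := by
  have hfactor : ∀ n : ℕ, 0 < 1 - x ^ 2 / ((n : ℝ) + 1) ^ 2 ∧ 1 - x ^ 2 / ((n : ℝ) + 1) ^ 2 ≤ 1 :=
    fun n => ⟨sub_pos.mpr (sq_div_succ_sq_lt_one hx n), by simp only [sub_le_self_iff]; positivity⟩
  have hπx : π * x ≠ 0 := mul_ne_zero pi_ne_zero hx0
  have hsin : 0 < sin (π * x) / (π * x) := by
    obtain ⟨hx₁, hx₂⟩ := abs_lt.mp hx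
    rcases hx0.lt_or_gt with hneg | hpos
    · rw [← neg_div_neg_eq, ← sin_neg]
      exact div_pos (sin_pos_of_pos_of_lt_pi (by nlinarith [pi_pos]) (by nlinarith [pi_pos]))
        (by nlinarith [pi_pos])
    · exact div_pos (sin_pos_of_pos_of_lt_pi (by positivity) (by nlinarith [pi_pos]))
        (by positivity)
  have hprod : Tendsto (fun N : ℕ => ∏ n ∈ Finset.range N, (1 - x ^ 2 / ((n : ℝ) + 1) ^ 2)) atTop
      (𝓝 (sin (π * x) / (π * x))) := by
    refine ((Real.tendsto_euler_sin_prod x).div_const (π * x)).congr fun N => ?_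
    field_simp
  have hlog := ((continuousAt_log hsin.ne').tendsto.comp hprod).neg
  refine (hasSum_iff_tendsto_nat_of_nonneg (fun n => ?_) _).mpr ?_
  · exact neg_nonneg.mpr (log_nonpos (hfactor n).1.le (hfactor n).2)
  · refine hlog.congr fun N => ?_
    simp only [Function.comp_apply, log_prod (fun n _ => (hfactor n).1.ne'), Finset.sum_neg_distrib]

lemma HasSum.of_hasSum_rows_of_nonneg {β γ : Type*} {F : β → γ → ℝ} {row : β → ℝ}
    {col : γ → ℝ} {L : ℝ} (hF : ∀ b c, 0 ≤ F b c) (hrow : ∀ b, HasSum (F b) (row b))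
    (hcol : ∀ c, HasSum (fun b => F b c) (col c)) (htot : HasSum row L) : HasSum col L := by
  have hsum : Summable (fun p : β × γ => F p.1 p.2) :=
    (summable_prod_of_nonneg fun p => hF p.1 p.2).mpr
      ⟨fun b => (hrow b).summable, htot.summable.congr fun b => ((hrow b).tsum_eq).symm⟩
  have hL : HasSum (fun p : β × γ => F p.1 p.2) L := by
    rw [← (hsum.hasSum.prod_fiberwise hrow).unique htot]
    exact hsum.hasSum
  have hL' : HasSum (fun q : γ × β => F q.2 q.1) L := (Equiv.prodComm β γ).hasSum_iff.mp hL
  exact hL'.prod_fiberwise hcol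

lemma Real.hasSum_one_sub_mul_cot_sub_log {x : ℝ} (hx0 : x ≠ 0) (hx : |x| < 1) :
    HasSum (fun j : ℕ => 2 * (x ^ 2 / ((j : ℝ) + 1) ^ 2) / (1 - x ^ 2 / ((j : ℝ) + 1) ^ 2)
        - log (1 - x ^ 2 / ((j : ℝ) + 1) ^ 2))
      (1 - π * x * cot (π * x) - log (sin (π * x) / (π * x))) := by
  have hint : ∀ n : ℤ, (n : ℝ) ≠ x := by
    rintro n rfl
    have : n = 0 := Int.abs_lt_one_iff.mp (by exact_mod_cast hx)
    exact hx0 (by simp [this])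
  have hcot := (hasSum_cot_sub_inv hint).mul_left (-x)
  have hlog := hasSum_neg_log_one_sub_sq_div hx0 hx
  rw [show 1 - π * x * cot (π * x) - log (sin (π * x) / (π * x))
      = -x * (π * cot (π * x) - 1 / x) + -log (sin (π * x) / (π * x)) by field_simp; ring]
  refine (hcot.add hlog).congr_fun fun j => ?_
  have hlt : x ^ 2 < ((j : ℝ) + 1) ^ 2 :=
    (div_lt_one (by positivity)).mp (sq_div_succ_sq_lt_one hx j)
  have hm : ((j : ℝ) + 1) ^ 2 - x ^ 2 ≠ 0 := (sub_pos.mpr hlt).ne'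
  have hm' : x ^ 2 - ((j : ℝ) + 1) ^ 2 ≠ 0 := (sub_neg.mpr hlt).ne
  rw [sub_eq_add_neg]
  congr 1
  field_simp
  ring

lemma hasSum_two_add_inv_mul_zetaR_mul_pow {x : ℝ} (hx0 : x ≠ 0) (hx : |x| < 1) :
    HasSum (fun n : ℕ => (2 + 1 / ((n : ℝ) + 1)) * zetaR (2 * (n + 1)) * x ^ (2 * (n + 1)))
      (1 - π * x * cot (π * x) - log (sin (π * x) / (π * x))) := by
  set a : ℕ → ℝ := fun j => x ^ 2 / ((j : ℝ) + 1) ^ 2 with ha_def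
  have ha : ∀ j, 0 ≤ a j ∧ a j < 1 := fun j => ⟨by positivity, sq_div_succ_sq_lt_one hx j⟩
  refine HasSum.of_hasSum_rows_of_nonneg
    (F := fun j (n : ℕ) => (2 + 1 / ((n : ℝ) + 1)) * a j ^ (n + 1))
    (fun j n => by have := (ha j).1; positivity)
    (fun j => hasSum_two_add_inv_mul_pow (abs_lt.mpr ⟨by linarith [(ha j).1], (ha j).2⟩))
    (fun n => ?_) (Real.hasSum_one_sub_mul_cot_sub_log hx0 hx)
  rw [mul_right_comm]
  refine ((hasSum_zetaR (k := 2 * (n + 1)) (by omega)).mul_left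
    ((2 + 1 / ((n : ℝ) + 1)) * x ^ (2 * (n + 1)))).congr_fun fun j => ?_
  rw [ha_def, div_pow, ← pow_mul, ← pow_mul]
  ring

/-- For `θ ∈ (0,π)`, `H_1(θ) = exp(1 − cos θ/sinc θ)/sinc θ = exp(θ²/2 + V₁(θ))` with
`V₁(θ) = Σ_{n≥2} (2+1/n)·ζ(2n)·(θ/π)^(2n)`. -/
theorem stmt18 (θ : ℝ) (hθ : θ ∈ Set.Ioo 0 π) :
    ∃ V : ℝ,
      HasSum (fun n : ℕ =>
        (2 + 1 / ((n : ℝ) + 2)) * zetaR (2 * (n + 2)) * (θ / π) ^ (2 * (n + 2))) V ∧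
      Real.exp (1 - Real.cos θ / _root_.sinc θ) / _root_.sinc θ = Real.exp (θ ^ 2 / 2 + V) := by
  obtain ⟨hθ₀, hθπ⟩ := hθ
  set x := θ / π
  have hθx : π * x = θ := mul_div_cancel₀ θ pi_ne_zero
  have hx0 : x ≠ 0 := by positivity
  have hx : |x| < 1 := by rwa [abs_of_pos (by positivity), div_lt_one pi_pos]
  have hS := hasSum_two_add_inv_mul_zetaR_mul_pow hx0 hx
  rw [hθx] at hS
  have hsinc : _root_.sinc θ = sin θ / θ := if_neg hθ₀.ne'
  have hsinc_pos : 0 < sin θ / θ := div_pos (sin_pos_of_pos_of_lt_pi hθ₀ hθπ) hθ₀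
  have hcos : cos θ / _root_.sinc θ = θ * cot θ := by
    rw [hsinc, cot_eq_cos_div_sin]
    field_simp
  have hfirst :
      (2 + 1 / ((0 : ℕ) + 1 : ℝ)) * zetaR (2 * (0 + 1)) * x ^ (2 * (0 + 1)) = θ ^ 2 / 2 := by
    rw [← hθx, zetaR_two]
    ring
  refine ⟨_, ((hasSum_nat_add_iff' 1).mpr hS).congr_fun fun n => ?_, ?_⟩
  · push_cast
    ring_nf
  · rw [Finset.sum_range_one, hfirst, add_sub_cancel, hcos, hsinc, exp_sub _ (log _),
      exp_log hsinc_pos]
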